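/- arXiv:0809.2280 — 7 statements merged into one kernel-verified Lean document; each statement's English description precedes it below -/
import Mathlib

section
/- For a 2x2 special unitary matrix G written as G = P⁰𝟙 + i P^i σ_i with (P⁰)² + |P|² = 1, and a unit vector X̂ ∈ ℝ³ with Lie algebra element X̂ = X̂^i σ_i, one has tr[½(𝟙 + X̂)G] = √(1 − |P × X̂|²) e^{iΘ} where cos Θ = P⁰/√(1 − |P × X̂|²); in particular the modulus of tr[½(𝟙 + X̂)G] is √(1 − |P × X̂|²) ≤ 1, with equality iff P is parallel to X̂. -/
/-!
Since `tr σᵢ = 0` and `tr (σᵢ σⱼ) = 2 δᵢⱼ`, the trace is the complex number `z = P⁰ + i P·X̂`.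
Lagrange's identity `|P × X̂|² = |P|²|X̂|² - (P·X̂)²` and the two normalisations give
`|z|² = (P⁰)² + (P·X̂)² = 1 - |P × X̂|²`, and `Θ = arg z` is the phase of the polar form of `z`.
-/

open Matrix Complex Finset

noncomputable def σ : Fin 3 → Matrix (Fin 2) (Fin 2) ℂ
  | 0 => !![0, 1; 1, 0]
  | 1 => !![0, -Complex.I; Complex.I, 0]
  | 2 => !![1, 0; 0, -1]

noncomputable def su2vec (v : Fin 3 → ℝ) : Matrix (Fin 2) (Fin 2) ℂ :=
  ∑ i, (v i : ℂ) • σ i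

noncomputable def levi {n m : ℕ} (x : Fin n → Fin m) : ℝ :=
  ∏ p ∈ Finset.univ.filter (fun p : Fin n × Fin n => p.1 < p.2),
    ((((x p.2 : ℕ) : ℤ) - ((x p.1 : ℕ) : ℤ)).sign : ℝ)

noncomputable def eps3 (i j k : Fin 3) : ℝ := levi ![i, j, k]
noncomputable def eps4 (i j k l : Fin 4) : ℝ := levi ![i, j, k, l]
noncomputable def eps5 (i j k l m : Fin 5) : ℝ := levi ![i, j, k, l, m]

noncomputable def det4 (a b c d : Fin 4 → ℝ) : ℝ := Matrix.det (Matrix.of fun I r => ![a, b, c, d] r I)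

noncomputable def tstar (a b c : Fin 4 → ℝ) (I : Fin 4) : ℝ :=
  ∑ J, ∑ K, ∑ L, eps4 I J K L * a J * b K * c L

noncomputable def hodge (X : Matrix (Fin 4) (Fin 4) ℝ) : Matrix (Fin 4) (Fin 4) ℝ :=
  Matrix.of fun I J => (1 / 2) * ∑ K, ∑ L, eps4 I J K L * X K L

noncomputable def sdPart (X : Matrix (Fin 4) (Fin 4) ℝ) (i : Fin 3) : ℝ :=
  (1 / 2) * (∑ j, ∑ k, eps3 i j k * X j.succ k.succ) + X 0 i.succ

noncomputable def asdPart (X : Matrix (Fin 4) (Fin 4) ℝ) (i : Fin 3) : ℝ :=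
  (1 / 2) * (∑ j, ∑ k, eps3 i j k * X j.succ k.succ) - X 0 i.succ

noncomputable def wedgeV (a b : Fin 4 → ℝ) : Matrix (Fin 4) (Fin 4) ℝ :=
  Matrix.of fun I J => a I * b J - a J * b I

theorem trace_su2vec (v : Fin 3 → ℝ) : (su2vec v).trace = 0 := by
  simp [su2vec, σ, Fin.sum_univ_three, Matrix.trace_fin_two]

theorem trace_su2vec_mul_su2vec (u v : Fin 3 → ℝ) :
    (su2vec u * su2vec v).trace = 2 * ((u ⬝ᵥ v : ℝ) : ℂ) := by
  simp [su2vec, σ, Fin.sum_univ_three, Matrix.trace_fin_two, dotProduct]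
  linear_combination (-2 * (u 1 * v 1 : ℂ)) * Complex.I_sq

theorem trace_half_one_add_su2vec_mul (X P : Fin 3 → ℝ) (P0 : ℝ) :
    Matrix.trace (((1 : ℝ) / 2 : ℂ) • ((1 : Matrix (Fin 2) (Fin 2) ℂ) + su2vec X) *
      ((P0 : ℂ) • (1 : Matrix (Fin 2) (Fin 2) ℂ) + Complex.I • su2vec P)) =
      P0 + (P ⬝ᵥ X : ℝ) * Complex.I := by
  simp only [smul_mul_assoc, add_mul, mul_add, one_mul, mul_one, mul_smul_comm, trace_add,
    trace_smul, trace_one, trace_su2vec, trace_su2vec_mul_su2vec, dotProduct_comm X]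
  rw [Fintype.card_fin]
  push_cast
  ring

theorem one_sub_cross_dot_cross_eq_sq_add_sq (P X : Fin 3 → ℝ) (P0 : ℝ) (hP : P0 ^ 2 + P ⬝ᵥ P = 1)
    (hX : X ⬝ᵥ X = 1) : 1 - (P ⨯₃ X) ⬝ᵥ (P ⨯₃ X) = P0 ^ 2 + (P ⬝ᵥ X) ^ 2 := by
  rw [cross_dot_cross, hX, dotProduct_comm X P]
  linear_combination -hP

theorem sum_sq_eq_dotProduct_self {n : Type*} [Fintype n] (v : n → ℝ) :
    ∑ i, v i ^ 2 = v ⬝ᵥ v := by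
  simp [dotProduct, sq]

theorem sqrt_one_sub_dotProduct_self_le_one {n : Type*} [Fintype n] (v : n → ℝ) :
    √(1 - v ⬝ᵥ v) ≤ 1 :=
  Real.sqrt_le_one.mpr (sub_le_self _ (Fintype.sum_nonneg fun i => mul_self_nonneg (v i)))

theorem sqrt_one_sub_dotProduct_self_eq_one_iff {n : Type*} [Fintype n] (v : n → ℝ) :
    √(1 - v ⬝ᵥ v) = 1 ↔ v = 0 := by
  rw [Real.sqrt_eq_one, sub_eq_self, dotProduct_self_eq_zero]

/-- decomposition of tr[(1/2)(1 + X̂)G] for G ∈ SU(2). -/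
theorem stmt0 (P X : Fin 3 → ℝ) (P0 : ℝ) (G : Matrix (Fin 2) (Fin 2) ℂ)
    (hG : G = (P0 : ℂ) • (1 : Matrix (Fin 2) (Fin 2) ℂ) + Complex.I • su2vec P)
    (hPnorm : P0 ^ 2 + ∑ i, P i ^ 2 = 1)
    (hX : ∑ i, X i ^ 2 = 1) :
    (∃ Θ : ℝ,
        Matrix.trace (((1 : ℝ) / 2 : ℂ) • ((1 : Matrix (Fin 2) (Fin 2) ℂ) + su2vec X) * G) =
          (Real.sqrt (1 - ∑ i, (crossProduct P X) i ^ 2) : ℂ) * Complex.exp (Complex.I * Θ) ∧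
        (Real.sqrt (1 - ∑ i, (crossProduct P X) i ^ 2) ≠ 0 →
          Real.cos Θ = P0 / Real.sqrt (1 - ∑ i, (crossProduct P X) i ^ 2))) ∧
      ‖(Matrix.trace (((1 : ℝ) / 2 : ℂ) • ((1 : Matrix (Fin 2) (Fin 2) ℂ) + su2vec X) * G))‖ =
        Real.sqrt (1 - ∑ i, (crossProduct P X) i ^ 2) ∧
      Real.sqrt (1 - ∑ i, (crossProduct P X) i ^ 2) ≤ 1 ∧
      (Real.sqrt (1 - ∑ i, (crossProduct P X) i ^ 2) = 1 ↔ crossProduct P X = 0) := by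
  simp only [sum_sq_eq_dotProduct_self] at hPnorm hX ⊢
  subst hG
  rw [trace_half_one_add_su2vec_mul]
  set z : ℂ := P0 + (P ⬝ᵥ X : ℝ) * Complex.I
  have hz : √(1 - (P ⨯₃ X) ⬝ᵥ (P ⨯₃ X)) = ‖z‖ := by
    rw [one_sub_cross_dot_cross_eq_sq_add_sq P X P0 hPnorm hX, Complex.norm_add_mul_I]
  refine ⟨⟨Complex.arg z, ?_, fun hz0 => ?_⟩, hz.symm, sqrt_one_sub_dotProduct_self_le_one _,
    sqrt_one_sub_dotProduct_self_eq_one_iff _⟩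
  · rw [hz, mul_comm Complex.I, Complex.norm_mul_exp_arg_mul_I]
  · rw [hz] at hz0 ⊢
    rw [Complex.cos_arg (norm_ne_zero_iff.mp hz0)]
    simp [z]
end

section
/- For G ∈ SU(2) and unit vector X̂ ∈ ℝ³, writing Ŷ = 2(𝟙 + X̂^iσ_i)/tr[(𝟙 + X̂^iσ_i)G]: if [G, X̂^iσ_i] = 0 (the maximality condition) then Ŷ G = G Ŷ = 𝟙 + X̂^iσ_i. -/
open Matrix Complex Finset

/-!
A rank-one `2 × 2` matrix `P` satisfies `P M P = tr(P M) P`; taking `M = 1` gives `P² = tr(P) P`.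
For `P = 𝟙 + X̂ⁱσᵢ` with `|X̂| = 1` we have `det P = 0` and `tr P = 2`, so for `G` commuting
with `P`, `2 P G = P P G = P G P = tr(P G) P`, i.e. `Ŷ G = P`.
-/

namespace Matrix

variable {R : Type*} [CommRing R]

theorem fin_two_mul_mul_eq_trace_mul_smul_sub_det_smul_adjugate
    (P M : Matrix (Fin 2) (Fin 2) R) :
    P * M * P = trace (P * M) • P - P.det • adjugate M := by
  ext i j
  fin_cases i <;> fin_cases j <;>
    simp [Matrix.mul_apply, Fin.sum_univ_two, trace_fin_two, det_fin_two, adjugate_fin_two] <;>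
    ring

theorem fin_two_mul_mul_eq_trace_mul_smul_of_det_eq_zero {P : Matrix (Fin 2) (Fin 2) R}
    (hP : P.det = 0) (M : Matrix (Fin 2) (Fin 2) R) : P * M * P = trace (P * M) • P := by
  rw [fin_two_mul_mul_eq_trace_mul_smul_sub_det_smul_adjugate, hP, zero_smul, sub_zero]

theorem fin_two_trace_smul_mul_eq_trace_mul_smul_of_commute {P G : Matrix (Fin 2) (Fin 2) R}
    (hP : P.det = 0) (hPG : Commute P G) : trace P • (P * G) = trace (P * G) • P := by
  calc trace P • (P * G) = P * 1 * P * G := by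
        rw [fin_two_mul_mul_eq_trace_mul_smul_of_det_eq_zero hP, mul_one, smul_mul_assoc]
    _ = P * G * P := by rw [mul_one, mul_assoc, mul_assoc, hPG.eq]
    _ = trace (P * G) • P := fin_two_mul_mul_eq_trace_mul_smul_of_det_eq_zero hP G

end Matrix

theorem su2vec_eq (X : Fin 3 → ℝ) :
    su2vec X = !![(X 2 : ℂ), X 0 - X 1 * I; X 0 + X 1 * I, -X 2] := by
  ext i j
  fin_cases i <;> fin_cases j <;> simp [su2vec, σ, Fin.sum_univ_three, sub_eq_add_neg]

theorem trace_one_add_su2vec (X : Fin 3 → ℝ) : trace (1 + su2vec X) = 2 := by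
  rw [trace_add, su2vec_eq, trace_fin_two_of]
  norm_num

theorem det_one_add_su2vec (X : Fin 3 → ℝ) :
    det (1 + su2vec X) = 1 - ∑ i, (X i : ℂ) ^ 2 := by
  rw [su2vec_eq, one_fin_two, of_add_of]
  simp only [cons_add_cons, empty_add_empty]
  rw [det_fin_two_of, Fin.sum_univ_three]
  linear_combination (X 1 : ℂ) ^ 2 * I_sq

theorem stmt2_general (G : Matrix (Fin 2) (Fin 2) ℂ)
    (X : Fin 3 → ℝ) (hX : ∑ i, X i ^ 2 = 1)
    (htr : Matrix.trace (((1 : Matrix (Fin 2) (Fin 2) ℂ) + su2vec X) * G) ≠ 0)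
    (hcomm : G * su2vec X = su2vec X * G) :
    ((2 / Matrix.trace (((1 : Matrix (Fin 2) (Fin 2) ℂ) + su2vec X) * G)) •
          ((1 : Matrix (Fin 2) (Fin 2) ℂ) + su2vec X)) * G =
        (1 : Matrix (Fin 2) (Fin 2) ℂ) + su2vec X ∧
      G * ((2 / Matrix.trace (((1 : Matrix (Fin 2) (Fin 2) ℂ) + su2vec X) * G)) •
          ((1 : Matrix (Fin 2) (Fin 2) ℂ) + su2vec X)) =
        (1 : Matrix (Fin 2) (Fin 2) ℂ) + su2vec X := by
  set P : Matrix (Fin 2) (Fin 2) ℂ := 1 + su2vec X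
  set t := trace (P * G)
  have hdet : P.det = 0 := by
    rw [det_one_add_su2vec, sub_eq_zero]
    exact_mod_cast hX.symm
  have hPG : Commute P G := (Commute.one_left G).add_left hcomm.symm
  have hkey : (2 : ℂ) • (P * G) = t • P := by
    rw [← trace_one_add_su2vec X]
    exact fin_two_trace_smul_mul_eq_trace_mul_smul_of_commute hdet hPG
  have hmain : (2 / t) • (P * G) = P := by
    rw [div_eq_inv_mul, mul_smul, hkey, smul_smul, inv_mul_cancel₀ htr, one_smul]
  exact ⟨by rwa [smul_mul_assoc], by rwa [mul_smul_comm, ← hPG.eq]⟩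

/-- the maximality condition implies ŶG = GŶ = 1 + X̂. -/
theorem stmt2 (G : Matrix (Fin 2) (Fin 2) ℂ)
    (hGu : star G * G = 1) (hGd : G.det = 1)
    (X : Fin 3 → ℝ) (hX : ∑ i, X i ^ 2 = 1)
    (htr : Matrix.trace (((1 : Matrix (Fin 2) (Fin 2) ℂ) + su2vec X) * G) ≠ 0)
    (hcomm : G * su2vec X = su2vec X * G) :
    ((2 / Matrix.trace (((1 : Matrix (Fin 2) (Fin 2) ℂ) + su2vec X) * G)) •
          ((1 : Matrix (Fin 2) (Fin 2) ℂ) + su2vec X)) * G =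
        (1 : Matrix (Fin 2) (Fin 2) ℂ) + su2vec X ∧
      G * ((2 / Matrix.trace (((1 : Matrix (Fin 2) (Fin 2) ℂ) + su2vec X) * G)) •
          ((1 : Matrix (Fin 2) (Fin 2) ℂ) + su2vec X)) =
        (1 : Matrix (Fin 2) (Fin 2) ℂ) + su2vec X :=
  stmt2_general G X hX htr hcomm
end

section
/- For u = Û⁰𝟙 + iÛ^iσ_i ∈ SU(2) corresponding to a unit vector Û ∈ ℝ⁴, and a bivector X on ℝ⁴ with self-dual/anti-self-dual parts X^± ∈ su(2), the identity (1/2i)(uX⁺ + X⁻u) = (⋆X·Û)₀ 𝟙 + i(⋆X·Û)_i σ^i holds, where (X·U)_I = X_{IJ}U^J and (⋆X)_{IJ} = ½ε_{IJKL}X^{KL}. -/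
/-! For antisymmetric `X` write `X⁺ = B + E` and `X⁻ = B - E` with magnetic part
`B_i = ½ ε_ijk X_jk` and electric part `E_i = X_0i`. The Pauli rule
`(v·σ)(w·σ) = (v ⬝ w) 𝟙 + i (v × w)·σ` gives, for `u = a 𝟙 + i v·σ`,
`u X⁺ + X⁻ u = 2i ((B ⬝ v) 𝟙 + i (v × E - a B)·σ)`.
On the other side the Hodge star exchanges the two parts: `(⋆X·U)_0 = B ⬝ Û` and
`(⋆X·U)_i = (Û × E - U⁰ B)_i`. -/

open Matrix Complex Finset

theorem su2vec_add (v w : Fin 3 → ℝ) : su2vec (v + w) = su2vec v + su2vec w := by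
  simp [su2vec, add_smul, Finset.sum_add_distrib]

theorem su2vec_sub (v w : Fin 3 → ℝ) : su2vec (v - w) = su2vec v - su2vec w := by
  simp [su2vec, sub_smul, Finset.sum_sub_distrib]

theorem su2vec_neg (v : Fin 3 → ℝ) : su2vec (-v) = -su2vec v := by
  simp [su2vec, neg_smul, Finset.sum_neg_distrib]

theorem su2vec_smul (r : ℝ) (v : Fin 3 → ℝ) : su2vec (r • v) = (r : ℂ) • su2vec v := by
  simp only [su2vec, Finset.smul_sum, smul_smul, Pi.smul_apply, smul_eq_mul, Complex.ofReal_mul]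

theorem su2vec_mul_su2vec (v w : Fin 3 → ℝ) :
    su2vec v * su2vec w = ((v ⬝ᵥ w : ℝ) : ℂ) • 1 + I • su2vec (v ⨯₃ w) := by
  ext a b
  fin_cases a <;> fin_cases b <;>
    simp [su2vec, σ, Fin.sum_univ_three, dotProduct, cross_apply, Matrix.mul_apply] <;>
    grind [I_sq]

theorem quaternion_mul_su2vec_add_su2vec_mul_quaternion (a : ℝ) (v b e : Fin 3 → ℝ) :
    ((a : ℂ) • 1 + I • su2vec v) * su2vec (b + e) +
        su2vec (b - e) * ((a : ℂ) • 1 + I • su2vec v) =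
      (2 * I) • (((b ⬝ᵥ v : ℝ) : ℂ) • 1 + I • su2vec (v ⨯₃ e - a • b)) := by
  simp only [add_mul, mul_add, smul_mul_assoc, mul_smul_comm, one_mul, mul_one, su2vec_mul_su2vec]
  simp only [map_add, map_sub, LinearMap.sub_apply, add_dotProduct, sub_dotProduct,
    dotProduct_comm v, ← cross_anticomm v b, ← cross_anticomm v e,
    su2vec_add, su2vec_sub, su2vec_neg, su2vec_smul]
  push_cast
  match_scalars <;> grind [I_sq]

def magneticPart (X : Matrix (Fin 4) (Fin 4) ℝ) : Fin 3 → ℝ := ![X 2 3, X 3 1, X 1 2]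

def electricPart (X : Matrix (Fin 4) (Fin 4) ℝ) : Fin 3 → ℝ := fun i => X 0 i.succ

section Antisymmetric

variable {X : Matrix (Fin 4) (Fin 4) ℝ}

theorem apply_swap_of_transpose_eq_neg (hX : Xᵀ = -X) (I J : Fin 4) : X J I = -X I J := by
  simpa using congrFun (congrFun hX I) J

theorem half_sum_eps3_of_transpose_eq_neg (hX : Xᵀ = -X) (i : Fin 3) :
    (1 / 2) * (∑ j, ∑ k, eps3 i j k * X j.succ k.succ) = magneticPart X i := by
  have := apply_swap_of_transpose_eq_neg hX
  fin_cases i <;>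
    simp [magneticPart, Fin.sum_univ_three, eps3, levi, Finset.prod_filter, Fintype.prod_prod_type,
      Fin.prod_univ_three, Int.sign_neg, Int.sign_eq_one_of_pos, this 1 2, this 1 3, this 2 3] <;> ring

theorem hodge_of_transpose_eq_neg (hX : Xᵀ = -X) :
    hodge X = let B := magneticPart X; let E := electricPart X
      !![0, B 0, B 1, B 2; -B 0, 0, E 2, -E 1; -B 1, -E 2, 0, E 0; -B 2, E 1, -E 0, 0] := by
  have := apply_swap_of_transpose_eq_neg hX
  ext I J
  fin_cases I <;> fin_cases J <;>
    simp [hodge, magneticPart, electricPart, Fin.sum_univ_four, eps4, levi, Finset.prod_filter,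
      Fintype.prod_prod_type, Fin.prod_univ_four, Int.sign_neg, Int.sign_eq_one_of_pos,
      this 0 1, this 0 2, this 0 3, this 1 2, this 1 3, this 2 3] <;> ring

theorem hodge_mulVec_zero (hX : Xᵀ = -X) (U : Fin 4 → ℝ) :
    ∑ J, hodge X 0 J * U J = magneticPart X ⬝ᵥ fun i => U i.succ := by
  simp [hodge_of_transpose_eq_neg hX, Fin.sum_univ_four, Fin.sum_univ_three, dotProduct]

theorem hodge_mulVec_succ (hX : Xᵀ = -X) (U : Fin 4 → ℝ) (i : Fin 3) :
    ∑ J, hodge X i.succ J * U J =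
      ((fun i => U i.succ) ⨯₃ electricPart X - U 0 • magneticPart X) i := by
  fin_cases i <;>
    simp [hodge_of_transpose_eq_neg hX, Fin.sum_univ_four, cross_apply] <;> ring

theorem sdPart_of_transpose_eq_neg (hX : Xᵀ = -X) :
    sdPart X = magneticPart X + electricPart X :=
  funext fun i => by rw [sdPart, half_sum_eps3_of_transpose_eq_neg hX]; rfl

theorem asdPart_of_transpose_eq_neg (hX : Xᵀ = -X) :
    asdPart X = magneticPart X - electricPart X :=
  funext fun i => by rw [asdPart, half_sum_eps3_of_transpose_eq_neg hX]; rfl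

end Antisymmetric

theorem stmt5_general (X : Matrix (Fin 4) (Fin 4) ℝ) (hXa : Xᵀ = -X)
    (U : Fin 4 → ℝ) :
    (1 / (2 * Complex.I)) •
        (((U 0 : ℂ) • (1 : Matrix (Fin 2) (Fin 2) ℂ) + Complex.I • su2vec (fun i => U i.succ)) *
            su2vec (sdPart X) +
          su2vec (asdPart X) *
            ((U 0 : ℂ) • (1 : Matrix (Fin 2) (Fin 2) ℂ) + Complex.I • su2vec (fun i => U i.succ))) =
      ((∑ J, hodge X 0 J * U J : ℝ) : ℂ) • (1 : Matrix (Fin 2) (Fin 2) ℂ) +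
        Complex.I • su2vec (fun i => ∑ J, hodge X i.succ J * U J) := by
  rw [sdPart_of_transpose_eq_neg hXa, asdPart_of_transpose_eq_neg hXa, quaternion_mul_su2vec_add_su2vec_mul_quaternion, smul_smul,
    one_div, inv_mul_cancel₀ (by simp), one_smul, hodge_mulVec_zero hXa]
  congr 3
  exact (funext (hodge_mulVec_succ hXa U)).symm

/-- the identity (1/2i)(uX⁺ + X⁻u) = (⋆X·Û)₀𝟙 + i(⋆X·Û)ᵢσⁱ. -/
theorem stmt5 (X : Matrix (Fin 4) (Fin 4) ℝ) (hXa : Xᵀ = -X)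
    (U : Fin 4 → ℝ) (hU : ∑ I, U I ^ 2 = 1) :
    (1 / (2 * Complex.I)) •
        (((U 0 : ℂ) • (1 : Matrix (Fin 2) (Fin 2) ℂ) + Complex.I • su2vec (fun i => U i.succ)) *
            su2vec (sdPart X) +
          su2vec (asdPart X) *
            ((U 0 : ℂ) • (1 : Matrix (Fin 2) (Fin 2) ℂ) + Complex.I • su2vec (fun i => U i.succ))) =
      ((∑ J, hodge X 0 J * U J : ℝ) : ℂ) • (1 : Matrix (Fin 2) (Fin 2) ℂ) +
        Complex.I • su2vec (fun i => ∑ J, hodge X i.succ J * U J) :=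
  stmt5_general X hXa U
end

section
/- With E_{ij} a nondegenerate closed co-tetrad on five labels and U^i its dual tetrad, the inverse formula E_{jk} = (V₄/3!) ∑_{i₁,i₂,i₃} ε_{kji₁i₂i₃} ⋆(U^{i₁} ∧ U^{i₂} ∧ U^{i₃}) holds, where V₄ = det(E_{21}, E_{31}, E_{41}, E_{51}). -/
open Matrix Complex Finset

/-!
Pair both sides with the covectors `U r.succ`: by `hU` they form the basis dual to the edges
`E r.succ 0`, which forces `∑ i, U i = 0` and `V₄ · det (U^1, …, U^4) = 1`. Pairing
`⋆(U^a ∧ U^b ∧ U^c)` with `U^m` gives the volume `det (U^m, U^a, U^b, U^c)`, and for five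
covectors summing to zero every such volume is `det (U^1, …, U^4) · ∑ₑ ε_{e m a b c}`: lift them
to the rows `(1, U^i)` of a 5 × 5 matrix, whose rows sum to `(5, 0, 0, 0, 0)`. The contraction
`∑ ε_{k j a b c} ∑ₑ ε_{e m a b c} = 6 (δ_{jm} − δ_{km})` then makes the pairing of the right-hand
side `V₄ · det (U^1, …, U^4) · (δ_{jm} − δ_{km}) = δ_{jm} − δ_{km}`, the pairing of `E_{jk}`.
-/

open Equiv Function

theorem levi_eq_zero_of_not_injective {n m : ℕ} {x : Fin n → Fin m} (hx : ¬ Injective x) :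
    levi x = 0 := by
  obtain ⟨p, q, hpq, hne⟩ : ∃ p q, x p = x q ∧ p ≠ q := by
    simpa [Injective, and_comm] using hx
  wlog hlt : p < q generalizing p q
  · exact this q p hpq.symm hne.symm (lt_of_le_of_ne (not_lt.mp hlt) hne.symm)
  exact Finset.prod_eq_zero (i := (p, q)) (by simpa using hlt) (by simp [hpq])

theorem levi_perm {n : ℕ} (σ : Perm (Fin n)) : levi σ = ((Perm.sign σ : ℤ) : ℝ) := by
  rw [Perm.sign_eq_prod_prod_Ioi, levi, Finset.prod_filter, Fintype.prod_prod_type]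
  push_cast
  refine Finset.prod_congr rfl fun i _ => ?_
  rw [← Finset.prod_filter]
  refine Finset.prod_congr (by ext; simp) fun j hj => ?_
  have hij : i < j := by simpa using hj
  rcases lt_or_gt_of_ne (σ.injective.ne hij.ne) with h | h
  · rw [if_pos h, Int.sign_eq_one_of_pos (by have := Fin.lt_def.mp h; omega)]; simp
  · rw [if_neg h.not_gt, Int.sign_eq_neg_one_of_neg (by have := Fin.lt_def.mp h; omega)]; simp

theorem levi_perm_comp {n : ℕ} (σ : Perm (Fin n)) (x : Fin n → Fin n) :
    levi (σ ∘ x) = (Perm.sign σ : ℤ) * levi x := by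
  by_cases hx : Injective x
  · obtain ⟨τ, rfl⟩ : ∃ τ : Perm (Fin n), ⇑τ = x :=
      ⟨Equiv.ofBijective x (Finite.injective_iff_bijective.mp hx), rfl⟩
    rw [← Perm.coe_mul, levi_perm, levi_perm, Perm.sign_mul]
    push_cast; ring
  · rw [levi_eq_zero_of_not_injective hx, levi_eq_zero_of_not_injective, mul_zero]
    exact fun h => hx (h.of_comp)

theorem det_submatrix_eq_levi_mul {n : ℕ} (A : Matrix (Fin n) (Fin n) ℝ) (y : Fin n → Fin n) :
    det (A.submatrix y id) = levi y * det A := by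
  by_cases hy : Injective y
  · obtain ⟨τ, rfl⟩ : ∃ τ : Perm (Fin n), ⇑τ = y :=
      ⟨Equiv.ofBijective y (Finite.injective_iff_bijective.mp hy), rfl⟩
    rw [det_permute, levi_perm]
  · obtain ⟨p, q, hpq, hne⟩ : ∃ p q, y p = y q ∧ p ≠ q := by
      simpa [Injective, and_comm] using hy
    rw [levi_eq_zero_of_not_injective hy, zero_mul]
    exact det_zero_of_row_eq hne (by ext; simp [hpq])

theorem det_of_eq_sum_levi {n : ℕ} (v : Fin n → Fin n → ℝ) :
    det (of v) = ∑ f : Fin n → Fin n, levi f * ∏ i, v i (f i) := by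
  rw [← det_transpose, det_apply']
  refine Fintype.sum_of_injective (fun σ : Perm (Fin n) => ⇑σ) DFunLike.coe_injective _ _
    (fun f hf => ?_) (fun σ => by simp [levi_perm])
  rw [levi_eq_zero_of_not_injective, zero_mul]
  exact fun h => hf ⟨Equiv.ofBijective f (Finite.injective_iff_bijective.mp h), rfl⟩

theorem det_of_cons_sum {n : ℕ} (g : Fin (n + 1) → Fin (n + 1) → ℝ)
    (rest : Fin n → Fin (n + 1) → ℝ) :
    det (of (Fin.cons (∑ e, g e) rest)) = ∑ e, det (of (Fin.cons (g e) rest)) := by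
  have := (detRowAlternating (R := ℝ) (n := Fin (n + 1))).map_update_sum
    Finset.univ 0 g (Fin.cons 0 rest)
  simp only [Fin.update_cons_zero] at this
  exact this

theorem sum_levi_cons_succ (n : ℕ) :
    ∑ e : Fin (n + 1), levi (Fin.cons e Fin.succ : Fin (n + 1) → Fin (n + 1)) = 1 := by
  rw [Fin.sum_univ_succ, Finset.sum_eq_zero fun i _ => levi_eq_zero_of_not_injective ?_, add_zero]
  · have : (Fin.cons 0 Fin.succ : Fin (n + 1) → Fin (n + 1)) = ⇑(1 : Perm (Fin (n + 1))) := by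
      funext i; cases i using Fin.cases <;> rfl
    rw [this, levi_perm]; simp
  · exact fun h => Fin.succ_ne_zero i (h (a₁ := 0) (a₂ := i.succ) rfl).symm

theorem det_comp_eq_mul_sum_levi {n : ℕ} (u : Fin (n + 1) → Fin n → ℝ) (hu : ∑ i, u i = 0)
    (x : Fin n → Fin (n + 1)) :
    det (of (u ∘ x)) =
      det (of (u ∘ Fin.succ)) * ∑ e, levi (Fin.cons e x : Fin (n + 1) → Fin (n + 1)) := by
  set w : Fin (n + 1) → Fin (n + 1) → ℝ := fun i => Fin.cons 1 (u i)
  have key : ∀ y : Fin n → Fin (n + 1), ((n : ℝ) + 1) * det (of (u ∘ y)) =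
      (∑ e, levi (Fin.cons e y : Fin (n + 1) → Fin (n + 1))) * det (of w) := by
    intro y
    have hrow : ∑ e, w e = Fin.cons ((n : ℝ) + 1) 0 := by
      ext c
      cases c using Fin.cases
      · simp [w, Finset.sum_apply]
      · simpa [w, Finset.sum_apply] using congrFun hu _
    have hsub : ∀ e, (of w).submatrix (Fin.cons e y) id = of (Fin.cons (w e) (w ∘ y)) := by
      intro e; ext r c; cases r using Fin.cases <;> rfl
    simp_rw [Finset.sum_mul, ← det_submatrix_eq_levi_mul, hsub]
    rw [← det_of_cons_sum, hrow, det_succ_row_zero, Fin.sum_univ_succ]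
    simp [w, Matrix.submatrix, Function.comp_def]
  have hw : ((n : ℝ) + 1) * det (of (u ∘ Fin.succ)) = det (of w) := by
    rw [key, sum_levi_cons_succ, one_mul]
  refine mul_left_cancel₀ (by positivity : ((n : ℝ) + 1) ≠ 0) ?_
  rw [key, ← hw]
  ring

theorem sum_pi_fin_succ {α M : Type*} [Fintype α] [AddCommMonoid M] {n : ℕ}
    (g : (Fin (n + 1) → α) → M) :
    ∑ f, g f = ∑ a, ∑ f : Fin n → α, g (Fin.cons a f) := by
  classical
  rw [← (Fin.consEquiv fun _ => α).sum_comp, Fintype.sum_prod_type]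
  rfl

theorem sum_pi_fin_zero {α M : Type*} [Fintype α] [AddCommMonoid M] (g : (Fin 0 → α) → M) :
    ∑ f, g f = g ![] := by
  rw [Fintype.sum_unique]
  exact congrArg g (Subsingleton.elim _ _)

theorem dotProduct_tstar (x a b c : Fin 4 → ℝ) :
    x ⬝ᵥ tstar a b c = det (of ![x, a, b, c]) := by
  rw [det_of_eq_sum_levi]
  simp only [sum_pi_fin_succ, sum_pi_fin_zero, Fin.prod_univ_four]
  simp only [dotProduct, tstar, eps4, Finset.mul_sum]
  refine Finset.sum_congr rfl fun I _ => Finset.sum_congr rfl fun J _ =>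
    Finset.sum_congr rfl fun K _ => Finset.sum_congr rfl fun L _ => ?_
  change _ = levi ![I, J, K, L] * (x I * a J * b K * c L)
  ring

/-- `levi` with values in `ℤ`, so that identities between finitely many symbols can be checked
by `decide`. -/
def leviInt {n m : ℕ} (x : Fin n → Fin m) : ℤ :=
  ∏ p ∈ Finset.univ.filter (fun p : Fin n × Fin n => p.1 < p.2),
    (((x p.2 : ℕ) : ℤ) - ((x p.1 : ℕ) : ℤ)).sign

theorem levi_eq_leviInt {n m : ℕ} (x : Fin n → Fin m) : levi x = leviInt x := by
  simp [levi, leviInt]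

theorem eps5_perm (π : Perm (Fin 5)) (a b c d e : Fin 5) :
    eps5 (π a) (π b) (π c) (π d) (π e) = (Perm.sign π : ℤ) * eps5 a b c d e := by
  have : ![π a, π b, π c, π d, π e] = π ∘ ![a, b, c, d, e] := by
    funext i; fin_cases i <;> rfl
  rw [eps5, eps5, this, levi_perm_comp]

theorem eps5_self (k a b c : Fin 5) : eps5 k k a b c = 0 :=
  levi_eq_zero_of_not_injective fun h => absurd (h (a₁ := 0) (a₂ := 1) rfl) (by decide)

theorem sum_eps5_zero_one_mul_sum_eps5 (m : Fin 5) :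
    ∑ i₁, ∑ i₂, ∑ i₃, eps5 0 1 i₁ i₂ i₃ * ∑ e, eps5 e m i₁ i₂ i₃ =
      6 * ((if 1 = m then 1 else 0) - (if 0 = m then 1 else 0)) := by
  have h : ∀ m : Fin 5, ∑ i₁ : Fin 5, ∑ i₂ : Fin 5, ∑ i₃ : Fin 5,
      leviInt ![0, 1, i₁, i₂, i₃] * ∑ e : Fin 5, leviInt ![e, m, i₁, i₂, i₃] =
        6 * ((if 1 = m then 1 else 0) - (if 0 = m then 1 else 0)) := by
    decide
  simpa [eps5, levi_eq_leviInt, apply_ite (Int.cast : ℤ → ℝ)] using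
    congrArg (Int.cast : ℤ → ℝ) (h m)

theorem sum_eps5_mul_sum_eps5 (k j m : Fin 5) :
    ∑ i₁, ∑ i₂, ∑ i₃, eps5 k j i₁ i₂ i₃ * ∑ e, eps5 e m i₁ i₂ i₃ =
      6 * ((if j = m then 1 else 0) - (if k = m then 1 else 0)) := by
  rcases eq_or_ne k j with rfl | hkj
  · simp [eps5_self]
  -- relabelling by `π` multiplies every symbol by `sign π`, so `(k, j)` may be taken to be `(0, 1)`
  obtain ⟨π, hπk, hπj⟩ : ∃ π : Perm (Fin 5), π k = 0 ∧ π j = 1 := by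
    refine ⟨swap 1 (swap 0 k j) * swap 0 k, ?_, ?_⟩
    · have : swap 0 k j ≠ 0 := by
        rw [Ne, swap_apply_eq_iff, swap_apply_left]; exact hkj.symm
      simp [swap_apply_of_ne_of_ne (Fin.zero_ne_one) this.symm]
    · simp
  have hss : ((Perm.sign π : ℤ) : ℝ) * (Perm.sign π : ℤ) = 1 := by
    rw [← Int.cast_mul, ← Units.val_mul, Int.units_mul_self, Units.val_one, Int.cast_one]
  have hsign : ∀ a b c d e,
      eps5 a b c d e = (Perm.sign π : ℤ) * eps5 (π a) (π b) (π c) (π d) (π e) := by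
    intro a b c d e
    rw [eps5_perm, ← mul_assoc, hss, one_mul]
  calc ∑ i₁, ∑ i₂, ∑ i₃, eps5 k j i₁ i₂ i₃ * ∑ e, eps5 e m i₁ i₂ i₃
      = ∑ i₁, ∑ i₂, ∑ i₃, eps5 0 1 (π i₁) (π i₂) (π i₃) *
          ∑ e, eps5 (π e) (π m) (π i₁) (π i₂) (π i₃) := by
        refine Finset.sum_congr rfl fun i₁ _ => Finset.sum_congr rfl fun i₂ _ =>
          Finset.sum_congr rfl fun i₃ _ => ?_
        rw [hsign k, hπk, hπj, Finset.mul_sum, Finset.mul_sum]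
        refine Finset.sum_congr rfl fun e _ => ?_
        rw [hsign e]
        linear_combination
          eps5 0 1 (π i₁) (π i₂) (π i₃) * eps5 (π e) (π m) (π i₁) (π i₂) (π i₃) * hss
    _ = ∑ i₁, ∑ i₂, ∑ i₃, eps5 0 1 i₁ i₂ i₃ * ∑ e, eps5 e (π m) i₁ i₂ i₃ := by
        refine Fintype.sum_equiv π _ _ fun i₁ => Fintype.sum_equiv π _ _ fun i₂ =>
          Fintype.sum_equiv π _ _ fun i₃ => ?_
        rw [Equiv.sum_comp π (fun e => eps5 e (π m) (π i₁) (π i₂) (π i₃))]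
    _ = 6 * ((if j = m then 1 else 0) - (if k = m then 1 else 0)) := by
        rw [sum_eps5_zero_one_mul_sum_eps5, ← hπk, ← hπj]
        simp only [π.apply_eq_iff_eq]

theorem dotProduct_sum_eps5_tstar (u : Fin 5 → Fin 4 → ℝ) (hu : ∑ i, u i = 0) (k j m : Fin 5) :
    u m ⬝ᵥ (fun I => ∑ i₁, ∑ i₂, ∑ i₃, eps5 k j i₁ i₂ i₃ * tstar (u i₁) (u i₂) (u i₃) I) =
      6 * det (of (u ∘ Fin.succ)) * ((if j = m then 1 else 0) - (if k = m then 1 else 0)) := by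
  have hvol : ∀ i₁ i₂ i₃, u m ⬝ᵥ tstar (u i₁) (u i₂) (u i₃) =
      det (of (u ∘ Fin.succ)) * ∑ e, eps5 e m i₁ i₂ i₃ := by
    intro i₁ i₂ i₃
    have : of ![u m, u i₁, u i₂, u i₃] = of (u ∘ ![m, i₁, i₂, i₃]) := by
      ext r; fin_cases r <;> rfl
    rw [dotProduct_tstar, this, det_comp_eq_mul_sum_levi u hu]
    rfl
  have hvec : (fun I => ∑ i₁, ∑ i₂, ∑ i₃, eps5 k j i₁ i₂ i₃ * tstar (u i₁) (u i₂) (u i₃) I) =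
      ∑ i₁, ∑ i₂, ∑ i₃, eps5 k j i₁ i₂ i₃ • tstar (u i₁) (u i₂) (u i₃) := by
    ext I; simp [Finset.sum_apply]
  simp only [hvec, dotProduct_sum, dotProduct_smul, smul_eq_mul, hvol]
  simp only [mul_left_comm (eps5 _ _ _ _ _), ← Finset.mul_sum]
  rw [sum_eps5_mul_sum_eps5]
  ring

def IsDualTetrad (E : Fin 5 → Fin 5 → Fin 4 → ℝ) (U : Fin 5 → Fin 4 → ℝ) : Prop :=
  ∀ i m k, U i ⬝ᵥ E m k = (if m = i then (1 : ℝ) else 0) - (if k = i then (1 : ℝ) else 0)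

namespace IsDualTetrad

variable {E : Fin 5 → Fin 5 → Fin 4 → ℝ} {U : Fin 5 → Fin 4 → ℝ}

theorem mul_transpose_eq_one (hU : IsDualTetrad E U) :
    of (U ∘ Fin.succ) * (of fun r : Fin 4 => E r.succ 0)ᵀ = 1 := by
  ext r s
  have := hU r.succ s.succ 0
  simp only [if_neg (Fin.succ_ne_zero r).symm, Fin.succ_inj, sub_zero, eq_comm (a := s)] at this
  rw [one_apply, ← this]
  rfl

theorem transpose_mul_eq_one (hU : IsDualTetrad E U) :
    (of fun r : Fin 4 => E r.succ 0)ᵀ * of (U ∘ Fin.succ) = 1 :=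
  mul_eq_one_comm.mp hU.mul_transpose_eq_one

theorem sum_eq_zero (hU : IsDualTetrad E U) : ∑ i, U i = 0 := by
  have h : (∑ i, U i) ᵥ* (of fun r : Fin 4 => E r.succ 0)ᵀ = 0 := by
    ext s
    have : (∑ i, U i) ⬝ᵥ E s.succ 0 = 0 := by
      simp [sum_dotProduct, hU _ s.succ 0, Finset.sum_sub_distrib]
    exact this
  rw [← vecMul_one (∑ i, U i), ← hU.transpose_mul_eq_one, ← vecMul_vecMul, h, zero_vecMul]

theorem eq_of_dotProduct_eq (hU : IsDualTetrad E U) {v w : Fin 4 → ℝ}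
    (h : ∀ r : Fin 4, U r.succ ⬝ᵥ v = U r.succ ⬝ᵥ w) : v = w := by
  have hN : of (U ∘ Fin.succ) *ᵥ v = of (U ∘ Fin.succ) *ᵥ w := funext h
  rw [← one_mulVec v, ← one_mulVec w, ← hU.transpose_mul_eq_one, ← mulVec_mulVec,
    ← mulVec_mulVec, hN]

theorem det4_mul_det (hU : IsDualTetrad E U) :
    det4 (E 1 0) (E 2 0) (E 3 0) (E 4 0) * det (of (U ∘ Fin.succ)) = 1 := by
  have : det4 (E 1 0) (E 2 0) (E 3 0) (E 4 0) = det (of fun r : Fin 4 => E r.succ 0)ᵀ := by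
    unfold det4; congr 1; ext I r; fin_cases r <;> rfl
  rw [this, ← det_mul, hU.transpose_mul_eq_one, det_one]

end IsDualTetrad

theorem stmt11_general (E : Fin 5 → Fin 5 → Fin 4 → ℝ)
    (U : Fin 5 → Fin 4 → ℝ)
    (hU : ∀ i m k,
      U i ⬝ᵥ E m k = (if m = i then (1 : ℝ) else 0) - (if k = i then (1 : ℝ) else 0)) :
    ∀ j k I, E j k I =
      (det4 (E 1 0) (E 2 0) (E 3 0) (E 4 0) / 6) *
        ∑ i1, ∑ i2, ∑ i3, eps5 k j i1 i2 i3 * tstar (U i1) (U i2) (U i3) I := by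
  have hdual : IsDualTetrad E U := hU
  intro j k
  refine congrFun (hdual.eq_of_dotProduct_eq fun r => ?_)
  set V := det4 (E 1 0) (E 2 0) (E 3 0) (E 4 0)
  set S := fun I => ∑ i1, ∑ i2, ∑ i3, eps5 k j i1 i2 i3 * tstar (U i1) (U i2) (U i3) I
  rw [hU, show (fun I => V / 6 * S I) = (V / 6) • S from rfl, dotProduct_smul,
    dotProduct_sum_eps5_tstar U hdual.sum_eq_zero, smul_eq_mul]
  linear_combination
    (-((if j = r.succ then 1 else 0) - (if k = r.succ then 1 else 0) : ℝ)) * hdual.det4_mul_det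

/-- inverse formula expressing the co-tetrad in terms of the tetrad. -/
theorem stmt11 (E : Fin 5 → Fin 5 → Fin 4 → ℝ)
    (hanti : ∀ i j, E i j + E j i = 0)
    (hclose : ∀ i j k, E i j + E j k + E k i = 0)
    (hnd : LinearIndependent ℝ ![E 1 0, E 2 0, E 3 0, E 4 0])
    (U : Fin 5 → Fin 4 → ℝ)
    (hU : ∀ i m k,
      U i ⬝ᵥ E m k = (if m = i then (1 : ℝ) else 0) - (if k = i then (1 : ℝ) else 0)) :
    ∀ j k I, E j k I =
      (det4 (E 1 0) (E 2 0) (E 3 0) (E 4 0) / 6) *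
        ∑ i1, ∑ i2, ∑ i3, eps5 k j i1 i2 i3 * tstar (U i1) (U i2) (U i3) I :=
  stmt11_general E U hU
end

section
/- Let E and E' be two nondegenerate co-tetrads for the same 4-simplex (labels 1,…,5), i.e. both satisfy antisymmetry, triangle closure, and suppose that for some global signs they give the same bivectors: ε ⋆(E_{mk}∧E_{nk}) = ε' ⋆(E'_{mk}∧E'_{nk}) for all appropriate index assignments. Then if there is an SO(4) matrix relating them edgewise, the two co-tetrads are equal up to a global sign: E'_{ij} = ±E_{ij} for all i,j with a sign independent of i,j. -/
open Matrix Complex Finset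

/-!
Contracting twice with the Levi-Civita symbol gives `⋆⋆ = 1` on bivectors, so the bivector
equality says `E'ₘ₀ ∧ E'ₙ₀ = εε' Eₘ₀ ∧ Eₙ₀`. In the basis `E₁₀, …, E₄₀` the coefficient matrix of
the `E'ᵢ₀` then has the same `2 × 2` minors as `εε' · 1`; with at least three indices this forces
it to be `s · 1` with `s² = εε'`, hence `εε' = 1` and `s = ±1`. Closure, `Eᵢⱼ = Eᵢ₀ - Eⱼ₀`,
carries the relation to every edge.
-/

section Closure

variable {α V : Type*} [AddCommGroup V] [IsAddTorsionFree V] {E : α → α → V}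

lemma diag_eq_zero_of_closure (hclose : ∀ i j k, E i j + E j k + E k i = 0) (i : α) :
    E i i = 0 := by
  have h : 3 • E i i = 0 := by rw [succ_nsmul, two_nsmul]; exact hclose i i i
  exact (nsmul_eq_zero_iff_right (by norm_num)).mp h

lemma eq_sub_of_closure (hclose : ∀ i j k, E i j + E j k + E k i = 0) (i j o : α) :
    E i j = E i o - E j o := by
  have h₁ := hclose i j o
  have h₂ := hclose i o o
  rw [diag_eq_zero_of_closure hclose o] at h₂
  linear_combination (norm := abel) h₁ - h₂

end Closure

/-- `eps4` with values in `ℤ`, where its identities can be checked by `decide`. -/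
def eps4Int (i j k l : Fin 4) : ℤ :=
  ∏ p ∈ Finset.univ.filter (fun p : Fin 4 × Fin 4 => p.1 < p.2),
    (((![i, j, k, l] p.2 : ℕ) : ℤ) - ((![i, j, k, l] p.1 : ℕ) : ℤ)).sign

lemma eps4_eq_intCast (i j k l : Fin 4) : eps4 i j k l = eps4Int i j k l := by
  rw [eps4, levi, eps4Int]; push_cast; rfl

lemma eps4_swap_last (I J K L : Fin 4) : eps4 I J L K = -eps4 I J K L := by
  have h : ∀ I J K L : Fin 4, eps4Int I J L K = -eps4Int I J K L := by decide
  simp only [eps4_eq_intCast]; exact_mod_cast h I J K L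

lemma sum_eps4_mul_eps4 (A B K L : Fin 4) :
    ∑ I, ∑ J, eps4 A B I J * eps4 I J K L =
      2 * ((if A = K then 1 else 0) * (if B = L then 1 else 0) -
        (if A = L then 1 else 0) * (if B = K then 1 else 0)) := by
  have h : ∀ A B K L : Fin 4, ∑ I, ∑ J, eps4Int A B I J * eps4Int I J K L =
      2 * ((if A = K then 1 else 0) * (if B = L then 1 else 0) -
        (if A = L then 1 else 0) * (if B = K then 1 else 0)) := by decide
  simp only [eps4_eq_intCast]; exact_mod_cast h A B K L

lemma Finset.sum_comm₄ {ι M : Type*} [Fintype ι] [AddCommMonoid M] (f : ι → ι → ι → ι → M) :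
    ∑ I, ∑ J, ∑ K, ∑ L, f I J K L = ∑ K, ∑ L, ∑ I, ∑ J, f I J K L :=
  calc ∑ I, ∑ J, ∑ K, ∑ L, f I J K L = ∑ I, ∑ K, ∑ L, ∑ J, f I J K L :=
        sum_congr rfl fun I _ => by
          rw [sum_comm]; exact sum_congr rfl fun K _ => sum_comm
    _ = ∑ K, ∑ L, ∑ I, ∑ J, f I J K L := by
        rw [sum_comm]; exact sum_congr rfl fun K _ => sum_comm

lemma hodge_smul (c : ℝ) (X : Matrix (Fin 4) (Fin 4) ℝ) : hodge (c • X) = c • hodge X := by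
  ext I J
  simp only [hodge, of_apply, Matrix.smul_apply, smul_eq_mul, mul_sum]
  exact sum_congr rfl fun K _ => sum_congr rfl fun L _ => by ring

lemma hodge_wedgeV_apply (a b : Fin 4 → ℝ) (I J : Fin 4) :
    hodge (wedgeV a b) I J = ∑ K, ∑ L, eps4 I J K L * a K * b L := by
  have hswap : ∑ K, ∑ L, eps4 I J K L * a L * b K = -∑ K, ∑ L, eps4 I J K L * a K * b L := by
    rw [sum_comm, ← sum_neg_distrib]
    refine sum_congr rfl fun L _ => ?_
    rw [← sum_neg_distrib]
    refine sum_congr rfl fun K _ => ?_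
    rw [eps4_swap_last I J L K]
    ring
  simp only [hodge, wedgeV, of_apply, mul_sub, sum_sub_distrib, ← mul_assoc, hswap]
  ring

lemma hodge_hodge {X : Matrix (Fin 4) (Fin 4) ℝ} (hX : Xᵀ = -X) : hodge (hodge X) = X := by
  ext A B
  have hBA : X B A = -X A B := by simpa using congrFun (congrFun hX A) B
  calc hodge (hodge X) A B
      = (1 / 4) * ∑ K, ∑ L, (∑ I, ∑ J, eps4 A B I J * eps4 I J K L) * X K L := by
        simp only [hodge, of_apply, mul_sum, sum_mul]
        rw [Finset.sum_comm₄]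
        exact sum_congr rfl fun K _ => sum_congr rfl fun L _ =>
          sum_congr rfl fun I _ => sum_congr rfl fun J _ => by ring
    _ = X A B := by
        simp only [one_div, sum_eps4_mul_eps4, mul_ite, mul_one, mul_zero, mul_sub, sub_mul,
          ite_mul, zero_mul, sum_sub_distrib, sum_ite_eq, mem_univ, ↓reduceIte, sum_ite_irrel,
          sum_const_zero, hBA, mul_neg, sub_neg_eq_add]
        ring

lemma wedgeV_transpose (a b : Fin 4 → ℝ) : (wedgeV a b)ᵀ = -wedgeV a b := by
  ext I J
  simp only [wedgeV, transpose_apply, Matrix.neg_apply, of_apply, neg_sub]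

lemma wedgeV_eq_vecMulVec (a b : Fin 4 → ℝ) : wedgeV a b = vecMulVec a b - vecMulVec b a := by
  ext I J
  simp only [wedgeV, vecMulVec, Matrix.sub_apply, of_apply, mul_comm (a J)]

lemma wedgeV_eq_smul_of_smul_hodge {a b a' b' : Fin 4 → ℝ} {e e' : ℝ} (he' : e' * e' = 1)
    (h : e • hodge (wedgeV a b) = e' • hodge (wedgeV a' b')) :
    wedgeV a' b' = (e * e') • wedgeV a b := by
  have h' := congrArg hodge h
  rw [hodge_smul, hodge_smul, hodge_hodge (wedgeV_transpose a b),
    hodge_hodge (wedgeV_transpose a' b')] at h'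
  rw [mul_comm, mul_smul, h', smul_smul, he', one_smul]

lemma linearMap_mul_sub_of_wedge_eq {m K : Type*} [CommRing K] {x y u w : m → K} {c : K}
    (hw : vecMulVec x y - vecMulVec y x = c • (vecMulVec u w - vecMulVec w u))
    (φ ψ : (m → K) →ₗ[K] K) : φ x * ψ y - ψ x * φ y = c * (φ u * ψ w - ψ u * φ w) := by
  have hcol : ∀ B, y B • x - x B • y = c • (w B • u - u B • w) := fun B => by
    ext A
    simpa [vecMulVec, mul_comm] using congrFun (congrFun hw A) B
  have hrow : φ x • y - φ y • x = c • (φ u • w - φ w • u) := by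
    ext B
    simpa [mul_comm] using congrArg φ (hcol B)
  simpa [mul_comm] using congrArg ψ hrow

section Minors

variable {ι K : Type*} [CommRing K] [DecidableEq ι]

def HasScalarMinors (M : ι → ι → K) (c : K) : Prop :=
  ∀ i j k l, M i k * M j l - M i l * M j k =
    c * ((if i = k then 1 else 0) * (if j = l then 1 else 0) -
      (if i = l then 1 else 0) * (if j = k then 1 else 0))

variable [IsDomain K] {M : ι → ι → K} {c : K}

namespace HasScalarMinors

lemma eq_zero_of_ne (hM : HasScalarMinors M c) (hc : c ≠ 0)
    (hthird : ∀ i j : ι, ∃ k, k ≠ i ∧ k ≠ j) {j k : ι} (hjk : j ≠ k) : M j k = 0 := by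
  obtain ⟨i, hij, hik⟩ := hthird j k
  have h₁ := hM i j i j
  have h₂ := hM i j i k
  have h₃ := hM i j k j
  simp only [hij, hik, hjk, hij.symm, if_true, if_false, mul_one, mul_zero, sub_zero] at h₁ h₂ h₃
  have h : c * M j k = 0 := by linear_combination -(M j k) * h₁ + M j j * h₂ + M j i * h₃
  exact (mul_eq_zero.mp h).resolve_left hc

lemma diag_mul_diag (hM : HasScalarMinors M c) (hc : c ≠ 0)
    (hthird : ∀ i j : ι, ∃ k, k ≠ i ∧ k ≠ j) {i j : ι} (hij : i ≠ j) : M i i * M j j = c := by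
  have h := hM i j i j
  simp only [hij, hij.symm, if_true, if_false, mul_one, mul_zero, sub_zero,
    hM.eq_zero_of_ne hc hthird hij, hM.eq_zero_of_ne hc hthird hij.symm] at h
  exact h

lemma diag_eq_diag (hM : HasScalarMinors M c) (hc : c ≠ 0)
    (hthird : ∀ i j : ι, ∃ k, k ≠ i ∧ k ≠ j) (i j : ι) : M i i = M j j := by
  obtain ⟨k, hki, hkj⟩ := hthird i j
  have hik := hM.diag_mul_diag hc hthird hki.symm
  have hjk := hM.diag_mul_diag hc hthird hkj.symm
  exact mul_right_cancel₀ (right_ne_zero_of_mul (hik ▸ hc)) (hik.trans hjk.symm)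

end HasScalarMinors

end Minors

theorem exists_eq_smul_of_wedge_eq_smul {ι m K : Type*} [CommRing K] [IsDomain K]
    [DecidableEq ι] [Nonempty ι] (b : Module.Basis ι K (m → K)) (v : ι → m → K) {c : K}
    (hc : c ≠ 0) (hthird : ∀ i j : ι, ∃ k, k ≠ i ∧ k ≠ j)
    (hw : ∀ i j, vecMulVec (v i) (v j) - vecMulVec (v j) (v i) =
      c • (vecMulVec (b i) (b j) - vecMulVec (b j) (b i))) :
    ∃ s, s * s = c ∧ ∀ i, v i = s • b i := by
  set M : ι → ι → K := fun i k => b.repr (v i) k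
  have hM : HasScalarMinors M c := fun i j k l => by
    simpa [M, Finsupp.single_apply] using
      linearMap_mul_sub_of_wedge_eq (hw i j) (b.coord k) (b.coord l)
  obtain ⟨i₀⟩ := ‹Nonempty ι›
  obtain ⟨j₀, hj₀, -⟩ := hthird i₀ i₀
  refine ⟨M i₀ i₀, ?_, fun i => b.ext_elem fun k => ?_⟩
  · rw [← hM.diag_mul_diag hc hthird hj₀.symm, hM.diag_eq_diag hc hthird i₀ j₀]
  · rw [map_smul, b.repr_self, Finsupp.smul_apply, Finsupp.single_apply]
    split_ifs with hik
    · subst hik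
      rw [smul_eq_mul, mul_one]
      exact hM.diag_eq_diag hc hthird i i₀
    · rw [smul_zero]
      exact hM.eq_zero_of_ne hc hthird hik

theorem stmt14_general (E E' : Fin 5 → Fin 5 → Fin 4 → ℝ) (e e' : ℝ)
    (he : e = 1 ∨ e = -1) (he' : e' = 1 ∨ e' = -1)
    (hclose : ∀ i j k, E i j + E j k + E k i = 0)
    (hclose' : ∀ i j k, E' i j + E' j k + E' k i = 0)
    (hnd : LinearIndependent ℝ ![E 1 0, E 2 0, E 3 0, E 4 0])
    (hbiv : ∀ m n k I J,
      e * (∑ K, ∑ L, eps4 I J K L * E m k K * E n k L) =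
        e' * (∑ K, ∑ L, eps4 I J K L * E' m k K * E' n k L)) :
    ∃ s : ℝ, (s = 1 ∨ s = -1) ∧ ∀ i j, E' i j = s • E i j := by
  have hee : e * e' = 1 ∨ e * e' = -1 := by
    rcases he with rfl | rfl <;> rcases he' with rfl | rfl <;> norm_num
  have hwedge : ∀ m n : Fin 5,
      wedgeV (E' m 0) (E' n 0) = (e * e') • wedgeV (E m 0) (E n 0) := fun m n =>
    wedgeV_eq_smul_of_smul_hodge (by rcases he' with rfl | rfl <;> norm_num)
      (by ext I J; simpa [hodge_wedgeV_apply] using hbiv m n 0 I J)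
  have hnd₀ : LinearIndependent ℝ fun i : Fin 4 => E i.succ 0 := by
    convert hnd using 1; ext i; fin_cases i <;> rfl
  let b := basisOfLinearIndependentOfCardEqFinrank hnd₀ (by simp)
  obtain ⟨s, hs, hv⟩ := exists_eq_smul_of_wedge_eq_smul b (fun i => E' i.succ 0) (c := e * e')
    (by rcases hee with h | h <;> simp [h]) (by decide)
    (fun i j => by simpa [b, wedgeV_eq_vecMulVec] using hwedge i.succ j.succ)
  have hee₁ : e * e' = 1 := hee.resolve_right fun h => by nlinarith [mul_self_nonneg s]
  have hE₀ : ∀ i, E' i 0 = s • E i 0 := Fin.cases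
    (by rw [diag_eq_zero_of_closure hclose', diag_eq_zero_of_closure hclose, smul_zero])
    (fun i => by simpa [b] using hv i)
  refine ⟨s, mul_self_eq_one_iff.mp (hs.trans hee₁), fun i j => ?_⟩
  rw [eq_sub_of_closure hclose' i j 0, eq_sub_of_closure hclose i j 0, smul_sub, hE₀, hE₀]

/-- two nondegenerate co-tetrads giving the same bivectors (up to global signs)
and related edgewise by an SO(4) matrix agree up to a global sign. -/
theorem stmt14 (E E' : Fin 5 → Fin 5 → Fin 4 → ℝ) (e e' : ℝ)
    (he : e = 1 ∨ e = -1) (he' : e' = 1 ∨ e' = -1)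
    (hanti : ∀ i j, E i j + E j i = 0)
    (hanti' : ∀ i j, E' i j + E' j i = 0)
    (hclose : ∀ i j k, E i j + E j k + E k i = 0)
    (hclose' : ∀ i j k, E' i j + E' j k + E' k i = 0)
    (hnd : LinearIndependent ℝ ![E 1 0, E 2 0, E 3 0, E 4 0])
    (hnd' : LinearIndependent ℝ ![E' 1 0, E' 2 0, E' 3 0, E' 4 0])
    (hbiv : ∀ m n k I J,
      e * (∑ K, ∑ L, eps4 I J K L * E m k K * E n k L) =
        e' * (∑ K, ∑ L, eps4 I J K L * E' m k K * E' n k L))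
    (hR : ∃ R : Matrix (Fin 4) (Fin 4) ℝ,
      Rᵀ * R = 1 ∧ R.det = 1 ∧ ∀ i j, E' i j = R.mulVec (E i j)) :
    ∃ s : ℝ, (s = 1 ∨ s = -1) ∧ ∀ i j, E' i j = s • E i j :=
  stmt14_general E E' e e' he he' hclose hclose' hnd hbiv
end

section
/- Sign factorization lemma: let α_{ij} (i,j = 1,…,5, i ≠ j) be a symmetric matrix of nonzero reals and Û_i ∈ ℝ⁴ unit vectors, any four of which are linearly independent, such that for each i there exists α_{ii} with ∑_{j=1}^5 α_{ij}Û_j = 0. Then α_{km}α_{lj} = α_{kj}α_{lm} for all indices, and consequently there exist nonzero reals α_i and a sign ε̃ = ±1 with α_{ij} = ε̃ α_i α_j for all i ≠ j, and ∑_j α_j Û_j = 0. -/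
open Matrix Complex Finset

/-!
The five rows `(α_{i1}, …, α_{i5})`, completed by their diagonal entries, all lie in the kernel of
`x ↦ ∑ⱼ xⱼ Ûⱼ`. Since any four of the `Ûⱼ` are independent, a kernel vector is determined up to
scale by any one coordinate, so the kernel is a line and every row is proportional to the first:
`α₁₁ α_{ij} = α_{i1} α_{1j}`. Here `α₁₁ ≠ 0`, since otherwise the first row would be a kernel vector
vanishing at coordinate 1, hence zero. Symmetry turns this into `α_{ij} = μ β_i β_j` with `β` the
first row and `μ = 1/α₁₁`; absorbing `√|μ|` into `β` leaves the sign of `μ`.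
-/

section KernelOfFamily

variable {ι R M : Type*} [Fintype ι] [DecidableEq ι] [CommRing R] [AddCommGroup M] [Module R M]
  {u : ι → M} {k : ι}

theorem eq_zero_of_sum_smul_eq_zero_of_apply_eq_zero
    (hu : LinearIndependent R fun j : {j // j ≠ k} => u j.1) {x : ι → R}
    (hx : ∑ j, x j • u j = 0) (hxk : x k = 0) : x = 0 := by
  rw [Fintype.sum_eq_add_sum_subtype_ne _ k, hxk, zero_smul, zero_add] at hx
  have hrest := Fintype.linearIndependent_iff.mp hu (fun j => x j) hx
  funext j
  by_cases hj : j = k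
  · rw [hj, hxk, Pi.zero_apply]
  · exact hrest ⟨j, hj⟩

theorem smul_eq_smul_of_sum_smul_eq_zero
    (hu : LinearIndependent R fun j : {j // j ≠ k} => u j.1) {x y : ι → R}
    (hx : ∑ j, x j • u j = 0) (hy : ∑ j, y j • u j = 0) : x k • y = y k • x := by
  refine sub_eq_zero.mp (eq_zero_of_sum_smul_eq_zero_of_apply_eq_zero hu ?_ ?_)
  · simp only [Pi.sub_apply, Pi.smul_apply, smul_eq_mul, sub_smul, mul_smul, sum_sub_distrib,
      ← smul_sum, hx, hy, smul_zero, sub_zero]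
  · simp only [Pi.sub_apply, Pi.smul_apply, smul_eq_mul, mul_comm, sub_self]

end KernelOfFamily

theorem exists_mul_mul_eq_of_sum_update_smul_eq_zero {ι K M : Type*} [Fintype ι] [DecidableEq ι]
    [Nontrivial ι] [Field K] [AddCommGroup M] [Module K M] {u : ι → M} {a : ι → ι → K}
    (hu : ∀ k, LinearIndependent K fun j : {j // j ≠ k} => u j.1)
    (hsymm : ∀ i j, a i j = a j i) (hne : ∀ i j, i ≠ j → a i j ≠ 0)
    (hker : ∀ i, ∃ c, ∑ j, Function.update (a i) i c j • u j = 0) :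
    ∃ μ ≠ 0, ∃ β : ι → K, (∀ i, β i ≠ 0) ∧ (∀ i j, i ≠ j → a i j = μ * β i * β j) ∧
      ∑ j, β j • u j = 0 := by
  choose c hc using hker
  set row : ι → ι → K := fun i => Function.update (a i) i (c i)
  have hrow : ∀ i j, i ≠ j → row i j = a i j := fun i j hij =>
    Function.update_of_ne hij.symm _ _
  obtain ⟨k, l, hkl⟩ := exists_pair_ne ι
  have hkk : row k k ≠ 0 := fun h =>
    hne k l hkl <| (hrow k l hkl).symm.trans <|
      congrFun (eq_zero_of_sum_smul_eq_zero_of_apply_eq_zero (hu k) (hc k) h) l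
  refine ⟨(row k k)⁻¹, inv_ne_zero hkk, row k, fun j => ?_, fun i j hij => ?_, hc k⟩
  · by_cases hjk : j = k
    · rwa [hjk]
    · rw [hrow k j (Ne.symm hjk)]
      exact hne k j (Ne.symm hjk)
  · have hprop := congrFun (smul_eq_smul_of_sum_smul_eq_zero (hu k) (hc k) (hc i)) j
    change row k k * row i j = row i k * row k j at hprop
    have hik : row i k = row k i := by
      by_cases hik : i = k
      · rw [hik]
      · rw [hrow i k hik, hrow k i (Ne.symm hik), hsymm]
    rw [← hrow i j hij, mul_assoc, eq_inv_mul_iff_mul_eq₀ hkk, hprop, hik]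

theorem Real.exists_sign_mul_mul_self_eq {μ : ℝ} (hμ : μ ≠ 0) :
    ∃ s : ℝ, (s = 1 ∨ s = -1) ∧ ∃ r ≠ 0, μ = s * r * r := by
  refine ⟨Real.sign μ, (Real.sign_apply_eq_of_ne_zero μ hμ).symm, √|μ|, ?_, ?_⟩
  · exact Real.sqrt_ne_zero'.mpr (abs_pos.mpr hμ)
  · rw [mul_assoc, Real.mul_self_sqrt (abs_nonneg μ)]
    rcases lt_or_gt_of_ne hμ with h | h
    · rw [Real.sign_of_neg h, abs_of_neg h]; ring
    · rw [Real.sign_of_pos h, abs_of_pos h]; ring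

theorem stmt15_general (a : Fin 5 → Fin 5 → ℝ) (Uh : Fin 5 → Fin 4 → ℝ)
    (hsymm : ∀ i j, a i j = a j i)
    (hne : ∀ i j, i ≠ j → a i j ≠ 0)
    (hnd : ∀ i : Fin 5, LinearIndependent ℝ (fun j : {j : Fin 5 // j ≠ i} => Uh j.1))
    (hdiag : ∀ i, ∃ c : ℝ, c • Uh i + ∑ j ∈ Finset.univ \ {i}, a i j • Uh j = 0) :
    (∀ k m l j : Fin 5, k ≠ m → l ≠ j → k ≠ j → l ≠ m →
        a k m * a l j = a k j * a l m) ∧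
      ∃ α : Fin 5 → ℝ, ∃ s : ℝ, (s = 1 ∨ s = -1) ∧ (∀ i, α i ≠ 0) ∧
        (∀ i j, i ≠ j → a i j = s * α i * α j) ∧
        ∑ j, α j • Uh j = 0 := by
  have hker : ∀ i, ∃ c, ∑ j, Function.update (a i) i c j • Uh j = 0 := fun i => by
    obtain ⟨c, hc⟩ := hdiag i
    refine ⟨c, hc ▸ ?_⟩
    rw [← sum_update_of_mem (mem_univ i)]
    refine sum_congr rfl fun j _ => ?_
    by_cases hji : j = i
    · simp only [hji, Function.update_self]
    · simp only [Function.update_of_ne hji]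
  obtain ⟨μ, hμ, β, hβ, hfac, hβsum⟩ :=
    exists_mul_mul_eq_of_sum_update_smul_eq_zero hnd hsymm hne hker
  obtain ⟨s, hs, r, hr, rfl⟩ := Real.exists_sign_mul_mul_self_eq hμ
  have hfac' : ∀ i j, i ≠ j → a i j = s * (r * β i) * (r * β j) := fun i j hij => by
    rw [hfac i j hij]; ring
  refine ⟨fun k m l j hkm hlj hkj hlm => ?_, fun i => r * β i, s, hs,
    fun i => mul_ne_zero hr (hβ i), hfac', ?_⟩
  · rw [hfac' k m hkm, hfac' l j hlj, hfac' k j hkj, hfac' l m hlm]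
    ring
  · simp only [mul_smul, ← smul_sum, hβsum, smul_zero]

/-- the sign-factorization lemma α_{ij} = ε̃ αᵢ αⱼ. -/
theorem stmt15 (a : Fin 5 → Fin 5 → ℝ) (Uh : Fin 5 → Fin 4 → ℝ)
    (hsymm : ∀ i j, a i j = a j i)
    (hne : ∀ i j, i ≠ j → a i j ≠ 0)
    (hunit : ∀ i, ∑ I, Uh i I ^ 2 = 1)
    (hnd : ∀ i : Fin 5, LinearIndependent ℝ (fun j : {j : Fin 5 // j ≠ i} => Uh j.1))
    (hdiag : ∀ i, ∃ c : ℝ, c • Uh i + ∑ j ∈ Finset.univ \ {i}, a i j • Uh j = 0) :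
    (∀ k m l j : Fin 5, k ≠ m → l ≠ j → k ≠ j → l ≠ m →
        a k m * a l j = a k j * a l m) ∧
      ∃ α : Fin 5 → ℝ, ∃ s : ℝ, (s = 1 ∨ s = -1) ∧ (∀ i, α i ≠ 0) ∧
        (∀ i j, i ≠ j → a i j = s * α i * α j) ∧
        ∑ j, α j • Uh j = 0 :=
  stmt15_general a Uh hsymm hne hnd hdiag
end

section
/- Gluing lemma: let U_0,…,U_4 and U'_0,…,U'_4 be vectors in ℝ⁴ with ∑_{i=0}^4 U_i = 0 and ∑_{i=0}^4 U'_i = 0, any four of each set linearly independent, such that U'_0/|U'_0| = ε̃ U_0/|U_0| for a sign ε̃ and εV(U_0 ∧ U_i) = ε'V'(U'_0 ∧ U'_i) for i = 1,…,4, where 1/V = det(U_1,…,U_4), 1/V' = det(U'_1,…,U'_4) and ε, ε' signs. Then ε = ε', there is a sign α with V U_0 = α V' U'_0, and U'_i = α U_i + a_i U_0 for coefficients a_i with ∑_i a_i = α(1 − V/V'). -/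
/-
`U₀` and `U'₀` are nonzero, since otherwise the closure relation would make the remaining four
vectors sum to zero and the volume infinite; so the normalized match gives `U'₀ = c U₀` with
`c ≠ 0`. Each bivector identity then reads `U₀ ∧ (εV Uᵢ - ε'V'c U'ᵢ) = 0`, hence
`U'ᵢ = l Uᵢ + aᵢ U₀` with `l ε'V'c = εV`, and closure of both simplices gives `c = l - ∑ aᵢ`.
As `U₀ = -∑ Uᵢ`, the rows `U'ᵢ` are `(l - a 1ᵀ)` times the rows `Uᵢ`, and the determinant of
`l - a 1ᵀ` is the characteristic polynomial of a rank-one matrix, `l³ (l - ∑ aᵢ) = l³ c`.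
Comparing `1/V' = l³ c / V` with `l ε'V'c = εV` gives `ε' = ε l²`, which forces `ε = ε'` and
`l = ±1`.
-/
open Matrix Complex Finset

theorem Matrix.det_of_smul_add_smul_neg_sum {n R : Type*} [Fintype n] [DecidableEq n]
    [CommRing R] (v : n → n → R) (l : R) (μ : n → R) :
    (of fun i => l • v i + μ i • -∑ j, v j).det =
      (l ^ Fintype.card n - (∑ i, μ i) * l ^ (Fintype.card n - 1)) * (of v).det := by
  have hfactor :
      of (fun i => l • v i + μ i • -∑ j, v j) = (scalar n l - vecMulVec μ 1) * of v := by
    rw [Matrix.sub_mul, vecMulVec_mul, scalar_apply, ← smul_eq_diagonal_mul]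
    ext i k
    simp [Fintype.sum_apply k v, vecMulVec_apply, vecMul, dotProduct, sub_eq_add_neg]
  rw [hfactor, det_mul, ← eval_charpoly, charpoly_vecMulVec]
  simp [dotProduct]

theorem Matrix.det_of_eq_zero_of_sum_eq_zero {n K : Type*} [Fintype n] [DecidableEq n]
    [Nonempty n] [Field K] {v : n → n → K} (h : ∑ i, v i = 0) : (of v).det = 0 := by
  refine exists_vecMul_eq_zero_iff.mp ⟨1, one_ne_zero, funext fun k => ?_⟩
  simpa [vecMul, dotProduct, Fintype.sum_apply k v] using congrFun h k

theorem exists_eq_smul_of_wedge_eq_zero {ι K : Type*} [Field K] {a b : ι → K} (ha : a ≠ 0)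
    (h : ∀ I J, a I * b J = a J * b I) : ∃ t : K, b = t • a := by
  obtain ⟨I₀, hI₀⟩ : ∃ I, a I ≠ 0 := Function.ne_iff.mp ha
  refine ⟨b I₀ / a I₀, funext fun J => ?_⟩
  rw [Pi.smul_apply, smul_eq_mul, div_mul_eq_mul_div, eq_div_iff hI₀]
  linear_combination h I₀ J

theorem exists_eq_div_smul_add_smul_of_wedge_eq {ι K : Type*} [Field K] {a b b' : ι → K}
    {s κ : K} (ha : a ≠ 0) (hκ : κ ≠ 0)
    (h : ∀ I J, s * (a I * b J - a J * b I) = κ * (a I * b' J - a J * b' I)) :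
    ∃ μ : K, b' = (s / κ) • b + μ • a := by
  obtain ⟨t, ht⟩ := exists_eq_smul_of_wedge_eq_zero (b := s • b - κ • b') ha fun I J => by
    simp only [Pi.sub_apply, Pi.smul_apply, smul_eq_mul]
    linear_combination h I J
  refine ⟨-t / κ, funext fun I => ?_⟩
  have hI := congrFun ht I
  simp only [Pi.sub_apply, Pi.add_apply, Pi.smul_apply, smul_eq_mul] at hI ⊢
  field_simp
  linear_combination -hI

theorem exists_eq_smul_of_normalize_eq {ι : Type*} [Fintype ι] {a a' : ι → ℝ} {s : ℝ}
    (h : ∀ I, (√(∑ J, a' J ^ 2))⁻¹ * a' I = s * ((√(∑ J, a J ^ 2))⁻¹ * a I)) :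
    ∃ c : ℝ, a' = c • a := by
  by_cases ha' : a' = 0
  · exact ⟨0, by simp [ha']⟩
  obtain ⟨I₀, hI₀⟩ : ∃ I, a' I ≠ 0 := Function.ne_iff.mp ha'
  have hr : √(∑ J, a' J ^ 2) ≠ 0 := (Real.sqrt_pos.mpr <|
    sum_pos' (fun J _ => sq_nonneg (a' J)) ⟨I₀, mem_univ _, by positivity⟩).ne'
  refine ⟨√(∑ J, a' J ^ 2) * s * (√(∑ J, a J ^ 2))⁻¹, funext fun I => ?_⟩
  calc a' I = √(∑ J, a' J ^ 2) * ((√(∑ J, a' J ^ 2))⁻¹ * a' I) := by field_simp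
    _ = _ := by rw [h I, Pi.smul_apply, smul_eq_mul]; ring

theorem eq_sub_sum_smul_of_sum_eq_zero {R M : Type*} [CommRing R] [AddCommGroup M] [Module R M]
    {n : ℕ} {U U' : Fin (n + 1) → M} {l : R} {μ : Fin (n + 1) → R}
    (hclose : ∑ i, U i = 0) (hclose' : ∑ i, U' i = 0)
    (hU' : ∀ i, i ≠ 0 → U' i = l • U i + μ i • U 0) :
    U' 0 = (l - ∑ i : Fin n, μ i.succ) • U 0 := by
  rw [Fin.sum_univ_succ] at hclose hclose'
  rw [eq_neg_of_add_eq_zero_left hclose',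
    sum_congr rfl fun i _ => hU' i.succ (Fin.succ_ne_zero i), sum_add_distrib, ← smul_sum,
    ← sum_smul, eq_neg_of_add_eq_zero_right hclose]
  module

theorem det4_eq_det_of_succ (U : Fin 5 → Fin 4 → ℝ) :
    det4 (U 1) (U 2) (U 3) (U 4) = (of fun i : Fin 4 => U i.succ).det := by
  rw [det4, ← det_transpose (of fun i : Fin 4 => U i.succ)]
  congr 1
  ext I r
  fin_cases r <;> rfl

theorem ne_zero_of_det4_ne_zero {U : Fin 5 → Fin 4 → ℝ} (hclose : ∑ i, U i = 0)
    (hdet : det4 (U 1) (U 2) (U 3) (U 4) ≠ 0) : U 0 ≠ 0 := by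
  intro hU0
  rw [Fin.sum_univ_succ, hU0, zero_add] at hclose
  exact hdet ((det4_eq_det_of_succ U).trans (det_of_eq_zero_of_sum_eq_zero hclose))

theorem det4_eq_of_eq_smul_add_smul {U U' : Fin 5 → Fin 4 → ℝ} {l : ℝ} {μ : Fin 5 → ℝ}
    (hclose : ∑ i, U i = 0) (hU' : ∀ i, i ≠ 0 → U' i = l • U i + μ i • U 0) :
    det4 (U' 1) (U' 2) (U' 3) (U' 4) =
      l ^ 3 * (l - ∑ i : Fin 4, μ i.succ) * det4 (U 1) (U 2) (U 3) (U 4) := by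
  rw [Fin.sum_univ_succ] at hclose
  have hrows : (fun i : Fin 4 => U' i.succ) =
      fun i => l • U i.succ + μ i.succ • -∑ j : Fin 4, U j.succ := by
    ext i : 1
    rw [hU' i.succ (Fin.succ_ne_zero i), eq_neg_of_add_eq_zero_left hclose]
  rw [det4_eq_det_of_succ, det4_eq_det_of_succ, hrows, det_of_smul_add_smul_neg_sum,
    Fintype.card_fin]
  ring

theorem eq_and_eq_one_or_eq_neg_one_of_scale {e e' l c V V' : ℝ}
    (he : e = 1 ∨ e = -1) (he' : e' = 1 ∨ e' = -1) (hV : V ≠ 0) (hV' : V' ≠ 0)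
    (hdet : V'⁻¹ = l ^ 3 * c * V⁻¹) (hscale : l * (e' * V' * c) = e * V) :
    e = e' ∧ (l = 1 ∨ l = -1) ∧ V = l * c * V' := by
  have hlc : l * c ≠ 0 := by
    rintro h
    rw [show l ^ 3 * c = l ^ 2 * (l * c) by ring, h, mul_zero, zero_mul] at hdet
    exact hV' (inv_eq_zero.mp hdet)
  have hVeq : V = l ^ 3 * c * V' := by
    field_simp at hdet
    linear_combination hdet
  have he'eq : e' = e * l ^ 2 := by
    refine mul_left_cancel₀ (mul_ne_zero hlc hV') ?_
    linear_combination hscale + e * hVeq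
  have hl2 : l ^ 2 = 1 := by
    rcases he with rfl | rfl <;> rcases he' with rfl | rfl <;> nlinarith [sq_nonneg l]
  refine ⟨by rw [he'eq, hl2, mul_one], by simpa using hl2, ?_⟩
  linear_combination hVeq + c * V' * l * hl2

theorem stmt17_general (U U' : Fin 5 → Fin 4 → ℝ)
    (hclose : ∑ i, U i = 0) (hclose' : ∑ i, U' i = 0)
    (e e' et V V' : ℝ)
    (he : e = 1 ∨ e = -1) (he' : e' = 1 ∨ e' = -1)
    (hV : V⁻¹ = det4 (U 1) (U 2) (U 3) (U 4)) (hVne : V ≠ 0)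
    (hV' : V'⁻¹ = det4 (U' 1) (U' 2) (U' 3) (U' 4)) (hV'ne : V' ≠ 0)
    (hmatch : ∀ I, (Real.sqrt (∑ J, U' 0 J ^ 2))⁻¹ * U' 0 I =
      et * ((Real.sqrt (∑ J, U 0 J ^ 2))⁻¹ * U 0 I))
    (hbiv : ∀ i, i ≠ (0 : Fin 5) → ∀ I J,
      e * V * (U 0 I * U i J - U 0 J * U i I) =
        e' * V' * (U' 0 I * U' i J - U' 0 J * U' i I)) :
    e = e' ∧
      ∃ α : ℝ, (α = 1 ∨ α = -1) ∧
        (∀ I, V * U 0 I = α * (V' * U' 0 I)) ∧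
        ∃ a : Fin 5 → ℝ,
          (∀ i, i ≠ (0 : Fin 5) → U' i = α • U i + a i • U 0) ∧
          (∑ i ∈ Finset.univ \ {(0 : Fin 5)}, a i) = α * (1 - V / V') := by
  have hU0 : U 0 ≠ 0 := ne_zero_of_det4_ne_zero hclose (hV ▸ inv_ne_zero hVne)
  have hU'0 : U' 0 ≠ 0 := ne_zero_of_det4_ne_zero hclose' (hV' ▸ inv_ne_zero hV'ne)
  obtain ⟨c, hc⟩ := exists_eq_smul_of_normalize_eq hmatch
  have hκ : e' * V' * c ≠ 0 := by
    refine mul_ne_zero (mul_ne_zero (by rcases he' with rfl | rfl <;> norm_num) hV'ne) ?_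
    rintro rfl
    exact hU'0 (by rw [hc, zero_smul])
  set l := e * V / (e' * V' * c)
  have hscale : l * (e' * V' * c) = e * V := div_mul_cancel₀ _ hκ
  have hrel : ∀ i, i ≠ 0 → ∃ μ : ℝ, U' i = l • U i + μ • U 0 := fun i hi =>
    exists_eq_div_smul_add_smul_of_wedge_eq hU0 hκ fun I J => by
      rw [hbiv i hi, hc, Pi.smul_apply, Pi.smul_apply, smul_eq_mul, smul_eq_mul]
      ring
  clear_value l
  choose! μ hμ using hrel
  have hcl : c = l - ∑ i : Fin 4, μ i.succ :=
    smul_left_injective ℝ hU0 (hc.symm.trans (eq_sub_sum_smul_of_sum_eq_zero hclose hclose' hμ))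
  obtain ⟨hee', hl, hVc⟩ := eq_and_eq_one_or_eq_neg_one_of_scale he he' hVne hV'ne
    (by rw [hV', hV, det4_eq_of_eq_smul_add_smul hclose hμ, ← hcl]) hscale
  have hsum : ∑ i ∈ univ \ {0}, μ i = ∑ i : Fin 4, μ i.succ := by
    rw [sdiff_singleton_eq_erase, ← add_right_inj (μ 0), add_sum_erase _ _ (mem_univ 0),
      Fin.sum_univ_succ]
  refine ⟨hee', l, hl, fun I => ?_, μ, hμ, ?_⟩
  · rw [hc, hVc, Pi.smul_apply, smul_eq_mul]
    ring
  · rw [hsum, hVc, mul_div_assoc, div_self hV'ne, mul_one]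
    rcases hl with rfl | rfl <;> linarith

/-- the gluing lemma relating the tetrads of two 4-simplices sharing a
tetrahedron. -/
theorem stmt17 (U U' : Fin 5 → Fin 4 → ℝ)
    (hclose : ∑ i, U i = 0) (hclose' : ∑ i, U' i = 0)
    (hnd : ∀ i : Fin 5, LinearIndependent ℝ (fun j : {j : Fin 5 // j ≠ i} => U j.1))
    (hnd' : ∀ i : Fin 5, LinearIndependent ℝ (fun j : {j : Fin 5 // j ≠ i} => U' j.1))
    (e e' et V V' : ℝ)
    (he : e = 1 ∨ e = -1) (he' : e' = 1 ∨ e' = -1) (het : et = 1 ∨ et = -1)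
    (hV : V⁻¹ = det4 (U 1) (U 2) (U 3) (U 4)) (hVne : V ≠ 0)
    (hV' : V'⁻¹ = det4 (U' 1) (U' 2) (U' 3) (U' 4)) (hV'ne : V' ≠ 0)
    (hmatch : ∀ I, (Real.sqrt (∑ J, U' 0 J ^ 2))⁻¹ * U' 0 I =
      et * ((Real.sqrt (∑ J, U 0 J ^ 2))⁻¹ * U 0 I))
    (hbiv : ∀ i, i ≠ (0 : Fin 5) → ∀ I J,
      e * V * (U 0 I * U i J - U 0 J * U i I) =
        e' * V' * (U' 0 I * U' i J - U' 0 J * U' i I)) :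
    e = e' ∧
      ∃ α : ℝ, (α = 1 ∨ α = -1) ∧
        (∀ I, V * U 0 I = α * (V' * U' 0 I)) ∧
        ∃ a : Fin 5 → ℝ,
          (∀ i, i ≠ (0 : Fin 5) → U' i = α • U i + a i • U 0) ∧
          (∑ i ∈ Finset.univ \ {(0 : Fin 5)}, a i) = α * (1 - V / V') :=
  stmt17_general U U' hclose hclose' e e' et V V' he he' hV hVne hV' hV'ne hmatch hbiv
end
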